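/- arXiv:2105.14339 — 3 statements merged into one kernel-verified Lean document; each statement's English description precedes it below -/
import Mathlib

section
/- Let L be a finite simple graph, and let A and B be subsets of its vertex set with A ∪ B equal to the whole vertex set and A ∩ B = {v} a single vertex, such that no edge of L joins a vertex of A \ {v} to a vertex of B \ {v}. Suppose the induced subgraphs L[A] and L[B] are both well-f-covered and every maximal induced forest of L[A] contains v. Then L is well-f-covered and f(L) = f(L[A]) + f(L[B]) - 1. -/
/-- `X` induces a forest in `G`: the subgraph induced by `X` is acyclic. -/
def IsInducedForest {V : Type*} (G : SimpleGraph V) (X : Finset V) : Prop :=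
  (G.induce (X : Set V)).IsAcyclic

/-- `X` is a maximal induced forest of `G`. -/
def IsMaximalInducedForest {V : Type*} (G : SimpleGraph V) (X : Finset V) : Prop :=
  IsInducedForest G X ∧ ∀ Y : Finset V, X ⊂ Y → ¬ IsInducedForest G Y

/-- The forest number of `G`: maximum cardinality of an induced forest. -/
noncomputable def forestNum {V : Type*} (G : SimpleGraph V) : ℕ :=
  sSup {n | ∃ X : Finset V, IsInducedForest G X ∧ X.card = n}

/-- `G` is well-f-covered: all maximal induced forests have the same cardinality. -/
def WellFCovered {V : Type*} (G : SimpleGraph V) : Prop :=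
  ∀ X Y : Finset V, IsMaximalInducedForest G X → IsMaximalInducedForest G Y →
    X.card = Y.card

def IsIndepFinset {V : Type*} (G : SimpleGraph V) (X : Finset V) : Prop :=
  ∀ ⦃u⦄, u ∈ X → ∀ ⦃v⦄, v ∈ X → ¬ G.Adj u v

def IsMaximalIndepSet {V : Type*} (G : SimpleGraph V) (X : Finset V) : Prop :=
  IsIndepFinset G X ∧ ∀ Y : Finset V, X ⊂ Y → ¬ IsIndepFinset G Y

noncomputable def indepNum {V : Type*} (G : SimpleGraph V) : ℕ :=
  sSup {n | ∃ X : Finset V, IsIndepFinset G X ∧ X.card = n}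

def WellCovered {V : Type*} (G : SimpleGraph V) : Prop :=
  ∀ X Y : Finset V, IsMaximalIndepSet G X → IsMaximalIndepSet G Y → X.card = Y.card

/-- The join of two graphs on disjoint vertex sets. -/
def joinGraph {V W : Type*} (G : SimpleGraph V) (H : SimpleGraph W) :
    SimpleGraph (V ⊕ W) where
  Adj a b :=
    match a, b with
    | Sum.inl u, Sum.inl v => G.Adj u v
    | Sum.inr u, Sum.inr v => H.Adj u v
    | Sum.inl _, Sum.inr _ => True
    | Sum.inr _, Sum.inl _ => True
  symm := ⟨by rintro (u|u) (v|v) h <;> first | exact h.symm | trivial⟩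
  loopless := ⟨by rintro (u|u) h <;> exact SimpleGraph.irrefl _ h⟩

/-! A cycle of `L` meeting both `A \ {v}` and `B \ {v}` would have to pass through the cut vertex
`v` on both of its arcs between those two vertices, so `X` induces a forest in `L` iff `X ∩ A` and
`X ∩ B` do. Let `X` be a maximal induced forest of `L`. If `v ∈ X`, then `X ∩ A` and `X ∩ B` are
maximal in `L[A]` and `L[B]` and share only `v`. If `v ∉ X`, then `X ∩ B` is maximal in `L[B]`,
and `(X ∩ A) ∪ {v}` is maximal in `L[A]`: `X ∩ A` itself is not, as it misses `v`. Either way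
`|X| + 1 = f(L[A]) + f(L[B])`. -/

open SimpleGraph Finset

namespace SimpleGraph

variable {V : Type*} {G : SimpleGraph V}

theorem isAcyclic_induce_iff {s : Set V} :
    (G.induce s).IsAcyclic ↔ ∀ ⦃u⦄ (c : G.Walk u u), c.IsCycle → ¬ ∀ x ∈ c.support, x ∈ s := by
  refine ⟨fun h u c hc hs => h (c.induce s hs) ?_, fun h u c hc => ?_⟩
  · rwa [← Walk.isCycle_map_iff_of_injective (f := (Embedding.induce s).toHom)
      Subtype.val_injective, Walk.map_induce]
  · refine h (c.map (Embedding.induce s).toHom) (hc.map Subtype.val_injective) ?_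
    rw [Walk.support_map]
    intro x hx
    obtain ⟨y, -, rfl⟩ := List.mem_map.1 hx
    exact y.2

theorem Walk.mem_support_of_mem_of_notMem {S : Set V} {v : V}
    (hS : ∀ ⦃x y⦄, G.Adj x y → x ∈ S → x ≠ v → y ∈ S) :
    ∀ {x y : V} (p : G.Walk x y), x ∈ S → y ∉ S → v ∈ p.support
  | _, _, .nil, hx, hy => absurd hx hy
  | x, _, .cons hadj p, hx, hy => by
    by_cases hxv : x = v
    · simp [hxv]
    · simp [p.mem_support_of_mem_of_notMem hS (hS hadj hx hxv) hy]

theorem Walk.IsCycle.eq_or_eq_of_mem_takeUntil_of_mem_dropUntil [DecidableEq V] {a b w : V}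
    {c : G.Walk a a} (hc : c.IsCycle) (hb : b ∈ c.support)
    (h₁ : w ∈ (c.takeUntil b hb).support) (h₂ : w ∈ (c.dropUntil b hb).support) :
    w = a ∨ w = b := by
  by_contra! hw
  have hnodup := hc.support_nodup
  rw [← c.take_spec hb, Walk.tail_support_append, List.nodup_append] at hnodup
  exact hnodup.2.2 w (((c.takeUntil b hb).mem_support_iff.1 h₁).resolve_left hw.1)
    w (((c.dropUntil b hb).mem_support_iff.1 h₂).resolve_left hw.2) rfl

end SimpleGraph

section InducedForest

variable {V : Type*} {G : SimpleGraph V}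

theorem IsInducedForest.mono {X Y : Finset V} (hY : IsInducedForest G Y) (h : X ⊆ Y) :
    IsInducedForest G X :=
  hY.embedding (G.induceHomOfLE (coe_subset.2 h))

theorem isInducedForest_empty : IsInducedForest G ∅ :=
  fun u _ _ => by simpa using u.2

theorem isInducedForest_induce_iff {s : Set V} (Y : Finset s) :
    IsInducedForest (G.induce s) Y ↔ IsInducedForest G (Y.map (Function.Embedding.subtype _)) := by
  unfold IsInducedForest
  let f := (Embedding.induce (G := G) s).comp (Embedding.induce (Y : Set s))
  have hrange : Set.range f = ↑(Y.map (Function.Embedding.subtype _)) := by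
    ext x
    simp only [Set.mem_range, coe_map, Function.Embedding.coe_subtype, Set.mem_image, mem_coe]
    exact ⟨fun ⟨y, hy⟩ => ⟨y, y.2, hy⟩, fun ⟨y, hy, hyx⟩ => ⟨⟨y, hy⟩, hyx⟩⟩
  rw [f.isoInduceRange.isAcyclic_iff, hrange]

def IsMaximalInducedForestIn [DecidableEq V] (G : SimpleGraph V) (A X : Finset V) : Prop :=
  X ⊆ A ∧ IsInducedForest G X ∧ ∀ w ∈ A, w ∉ X → ¬ IsInducedForest G (insert w X)

theorem isMaximalInducedForest_induce_iff [DecidableEq V] {A : Finset V}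
    (Y : Finset (A : Set V)) :
    IsMaximalInducedForest (G.induce A) Y ↔
      IsMaximalInducedForestIn G A (Y.map (Function.Embedding.subtype _)) := by
  refine ⟨fun ⟨hY, hmax⟩ => ⟨?_, (isInducedForest_induce_iff Y).1 hY, fun w hw hwY hF => ?_⟩,
    fun ⟨_, hY, hmax⟩ => ⟨(isInducedForest_induce_iff Y).2 hY, fun Z hYZ hZ => ?_⟩⟩
  · intro x hx
    obtain ⟨y, -, rfl⟩ := mem_map.1 hx
    exact y.2
  · refine hmax (insert ⟨w, hw⟩ Y) (ssubset_insert fun h => hwY (mem_map_of_mem _ h)) ?_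
    rwa [isInducedForest_induce_iff, map_insert]
  · obtain ⟨z, hzZ, hzY⟩ := exists_of_ssubset hYZ
    refine hmax z z.2 (fun h => hzY ?_) ?_
    · obtain ⟨y, hy, hyz⟩ := mem_map.1 h
      rwa [← Subtype.ext hyz]
    · have hF := (isInducedForest_induce_iff _).1 (hZ.mono (insert_subset hzZ hYZ.subset))
      rwa [map_insert] at hF

theorem IsMaximalInducedForestIn.exists_map_eq [DecidableEq V] {A X : Finset V}
    (hX : IsMaximalInducedForestIn G A X) :
    ∃ Y : Finset (A : Set V), IsMaximalInducedForest (G.induce A) Y ∧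
      Y.map (Function.Embedding.subtype _) = X :=
  have hmap := subtype_map_of_mem (p := (· ∈ (A : Set V))) hX.1
  ⟨_, by rwa [isMaximalInducedForest_induce_iff, hmap], hmap⟩

theorem exists_isMaximalInducedForest_card_eq_forestNum [Fintype V] (G : SimpleGraph V) :
    ∃ X, IsMaximalInducedForest G X ∧ X.card = forestNum G := by
  have hbdd : BddAbove {n | ∃ X : Finset V, IsInducedForest G X ∧ X.card = n} :=
    ⟨Fintype.card V, by rintro _ ⟨X, -, rfl⟩; exact X.card_le_univ⟩
  obtain ⟨X, hX, hcard⟩ : forestNum G ∈ {n | ∃ X : Finset V, IsInducedForest G X ∧ X.card = n} :=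
    Nat.sSup_mem ⟨0, ∅, isInducedForest_empty, rfl⟩ hbdd
  refine ⟨X, ⟨hX, fun Y hXY hY => ?_⟩, hcard⟩
  have : Y.card ≤ forestNum G := le_csSup hbdd ⟨Y, hY, rfl⟩
  have := card_lt_card hXY
  omega

theorem WellFCovered.card_eq_forestNum [Fintype V] (hG : WellFCovered G) {X : Finset V}
    (hX : IsMaximalInducedForest G X) : X.card = forestNum G := by
  obtain ⟨M, hM, hcard⟩ := exists_isMaximalInducedForest_card_eq_forestNum G
  rw [hG X M hX hM, hcard]

theorem WellFCovered.card_eq_of_isMaximalInducedForestIn [DecidableEq V] {A X : Finset V}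
    (hA : WellFCovered (G.induce A)) (hX : IsMaximalInducedForestIn G A X) :
    X.card = forestNum (G.induce A) := by
  obtain ⟨Y, hY, rfl⟩ := hX.exists_map_eq
  rw [card_map, hA.card_eq_forestNum hY]

end InducedForest

/-- `G` is `G[A]` and `G[B]` glued at the vertex `v`. -/
structure IsVertexSeparation {V : Type*} [Fintype V] [DecidableEq V] (G : SimpleGraph V)
    (A B : Finset V) (v : V) : Prop where
  union_eq : A ∪ B = univ
  inter_eq : A ∩ B = {v}
  not_adj : ∀ a ∈ A, ∀ b ∈ B, a ≠ v → b ≠ v → ¬ G.Adj a b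

namespace IsVertexSeparation

variable {V : Type*} [Fintype V] [DecidableEq V] {G : SimpleGraph V} {A B X : Finset V} {v : V}

theorem symm (hS : IsVertexSeparation G A B v) : IsVertexSeparation G B A v :=
  ⟨by rw [union_comm, hS.union_eq], by rw [inter_comm, hS.inter_eq],
    fun b hb a ha hbv hav hadj => hS.not_adj a ha b hb hav hbv hadj.symm⟩

theorem mem_left (hS : IsVertexSeparation G A B v) : v ∈ A :=
  (mem_inter.1 (hS.inter_eq ▸ mem_singleton_self v)).1

theorem mem_right_of_notMem_left (hS : IsVertexSeparation G A B v) {x : V} (hx : x ∉ A) :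
    x ∈ B :=
  (mem_union.1 (hS.union_eq ▸ mem_univ x)).resolve_left hx

theorem notMem_right (hS : IsVertexSeparation G A B v) {x : V} (hx : x ∈ A) (hxv : x ≠ v) :
    x ∉ B :=
  fun hxB => hxv (mem_singleton.1 (hS.inter_eq ▸ mem_inter.2 ⟨hx, hxB⟩))

theorem mem_left_of_adj (hS : IsVertexSeparation G A B v) {x y : V} (hadj : G.Adj x y)
    (hx : x ∈ A) (hxv : x ≠ v) : y ∈ A := by
  by_contra hy
  exact hS.not_adj x hx y (hS.mem_right_of_notMem_left hy) hxv
    (fun h => hy (h ▸ hS.mem_left)) hadj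

theorem support_subset_or_of_isCycle (hS : IsVertexSeparation G A B v) {u : V} {c : G.Walk u u}
    (hc : c.IsCycle) :
    (∀ x ∈ c.support, x ∈ A) ∨ ∀ x ∈ c.support, x ∈ B := by
  by_contra! h
  obtain ⟨⟨b, hb, hbA⟩, a, ha, haB⟩ := h
  have hb' : b ∈ (c.rotate a ha).support := (c.mem_support_rotate_iff a ha).2 hb
  have hvA := ((c.rotate a ha).takeUntil b hb').mem_support_of_mem_of_notMem (S := ↑A)
    (fun _ _ => hS.mem_left_of_adj) (hS.symm.mem_right_of_notMem_left haB) hbA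
  have hvB := ((c.rotate a ha).dropUntil b hb').mem_support_of_mem_of_notMem (S := ↑B)
    (fun _ _ => hS.symm.mem_left_of_adj) (hS.mem_right_of_notMem_left hbA) haB
  rcases (hc.rotate ha).eq_or_eq_of_mem_takeUntil_of_mem_dropUntil hb' hvA hvB with rfl | rfl
  · exact haB hS.symm.mem_left
  · exact hbA hS.mem_left

theorem isInducedForest_iff (hS : IsVertexSeparation G A B v) (X : Finset V) :
    IsInducedForest G X ↔ IsInducedForest G (X ∩ A) ∧ IsInducedForest G (X ∩ B) := by
  refine ⟨fun h => ⟨h.mono inter_subset_left, h.mono inter_subset_left⟩, fun ⟨hA, hB⟩ => ?_⟩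
  unfold IsInducedForest at *
  rw [isAcyclic_induce_iff] at *
  intro u c hc hX
  rcases hS.support_subset_or_of_isCycle hc with h | h
  · exact hA c hc fun x hx => mem_inter.2 ⟨hX x hx, h x hx⟩
  · exact hB c hc fun x hx => mem_inter.2 ⟨hX x hx, h x hx⟩

theorem not_isInducedForest_insert_inter (hS : IsVertexSeparation G A B v)
    (hX : IsMaximalInducedForest G X) {w : V} (hwA : w ∈ A) (hwv : w ≠ v) (hwX : w ∉ X) :
    ¬ IsInducedForest G (insert w (X ∩ A)) := by
  intro hF
  refine hX.2 _ (ssubset_insert hwX) ((hS.isInducedForest_iff _).2 ⟨?_, ?_⟩)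
  · rwa [insert_inter_of_mem hwA]
  · rw [insert_inter_of_notMem (hS.notMem_right hwA hwv)]
    exact hX.1.mono inter_subset_left

theorem isMaximalInducedForestIn_of_mem (hS : IsVertexSeparation G A B v)
    (hX : IsMaximalInducedForest G X) {Y : Finset V} (hXY : X ∩ A ⊆ Y) (hYA : Y ⊆ A)
    (hY : IsInducedForest G Y) (hvY : v ∈ Y) :
    IsMaximalInducedForestIn G A Y :=
  ⟨hYA, hY, fun w hwA hwY hF => hS.not_isInducedForest_insert_inter hX hwA
    (fun h => hwY (h ▸ hvY)) (fun h => hwY (hXY (mem_inter.2 ⟨h, hwA⟩)))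
    (hF.mono (insert_subset_insert w hXY))⟩

theorem isInducedForest_insert_inter_of_notMem (hS : IsVertexSeparation G A B v)
    (hX : IsMaximalInducedForest G X) (hvX : v ∉ X)
    (hv : ∀ Y, IsMaximalInducedForestIn G A Y → v ∈ Y) :
    IsInducedForest G (insert v (X ∩ A)) := by
  by_contra hF
  refine hvX (mem_inter.1 (hv _ ⟨inter_subset_right, hX.1.mono inter_subset_left,
    fun w hwA hwX => ?_⟩)).1
  by_cases hwv : w = v
  · exact hwv ▸ hF
  · exact hS.not_isInducedForest_insert_inter hX hwA hwv fun h => hwX (mem_inter.2 ⟨h, hwA⟩)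

theorem isMaximalInducedForestIn_inter_of_notMem (hS : IsVertexSeparation G A B v)
    (hX : IsMaximalInducedForest G X) (hvX : v ∉ X) (hF : IsInducedForest G (insert v (X ∩ A))) :
    IsMaximalInducedForestIn G B (X ∩ B) := by
  refine ⟨inter_subset_right, hX.1.mono inter_subset_left, fun w hwB hwX hFB => ?_⟩
  by_cases hwv : w = v
  · subst hwv
    refine hX.2 _ (ssubset_insert hvX) ((hS.isInducedForest_iff _).2 ?_)
    rw [insert_inter_of_mem hS.mem_left, insert_inter_of_mem hS.symm.mem_left]
    exact ⟨hF, hFB⟩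
  · exact hS.symm.not_isInducedForest_insert_inter hX hwB hwv
      (fun h => hwX (mem_inter.2 ⟨h, hwB⟩)) hFB

theorem card_add_one_eq (hS : IsVertexSeparation G A B v) (hX : IsMaximalInducedForest G X)
    {a b : ℕ} (ha : ∀ Y, IsMaximalInducedForestIn G A Y → Y.card = a)
    (hb : ∀ Y, IsMaximalInducedForestIn G B Y → Y.card = b)
    (hv : ∀ Y, IsMaximalInducedForestIn G A Y → v ∈ Y) :
    X.card + 1 = a + b := by
  have hsplit : (X ∩ A).card + (X ∩ B).card = X.card + (X ∩ {v}).card := by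
    rw [← card_union_add_card_inter, ← inter_union_distrib_left, hS.union_eq, inter_univ,
      ← inter_inter_distrib_left, hS.inter_eq]
  by_cases hvX : v ∈ X
  · have hcardA := ha _ (hS.isMaximalInducedForestIn_of_mem hX subset_rfl inter_subset_right
      (hX.1.mono inter_subset_left) (mem_inter.2 ⟨hvX, hS.mem_left⟩))
    have hcardB := hb _ (hS.symm.isMaximalInducedForestIn_of_mem hX subset_rfl
      inter_subset_right (hX.1.mono inter_subset_left) (mem_inter.2 ⟨hvX, hS.symm.mem_left⟩))
    rw [inter_singleton_of_mem hvX, card_singleton] at hsplit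
    omega
  · have hF := hS.isInducedForest_insert_inter_of_notMem hX hvX hv
    have hcardA := ha _ (hS.isMaximalInducedForestIn_of_mem hX (subset_insert _ _)
      (insert_subset hS.mem_left inter_subset_right) hF (mem_insert_self _ _))
    have hcardB := hb _ (hS.isMaximalInducedForestIn_inter_of_notMem hX hvX hF)
    rw [card_insert_of_notMem fun h => hvX (mem_inter.1 h).1] at hcardA
    rw [inter_singleton_of_notMem hvX, card_empty] at hsplit
    omega

end IsVertexSeparation

/-- If `A ∪ B` is the whole vertex set of `L`, `A ∩ B = {v}`, no edge of
`L` joins `A \ {v}` to `B \ {v}`, the induced subgraphs `L[A]` and `L[B]` are both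
well-f-covered, and every maximal induced forest of `L[A]` contains `v`, then `L` is
well-f-covered and `f(L) = f(L[A]) + f(L[B]) - 1`. -/
theorem stmt7 {V : Type*} [Fintype V] [DecidableEq V] (L : SimpleGraph V)
    (A B : Finset V) (v : V) (hvA : v ∈ A)
    (hcover : A ∪ B = Finset.univ) (hinter : A ∩ B = {v})
    (hnoedge : ∀ a ∈ A, ∀ b ∈ B, a ≠ v → b ≠ v → ¬ L.Adj a b)
    (hwA : WellFCovered (L.induce (A : Set V)))
    (hwB : WellFCovered (L.induce (B : Set V)))
    (hv : ∀ X : Finset (A : Set V),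
      IsMaximalInducedForest (L.induce (A : Set V)) X → (⟨v, hvA⟩ : (A : Set V)) ∈ X) :
    WellFCovered L ∧
      forestNum L =
        forestNum (L.induce (A : Set V)) + forestNum (L.induce (B : Set V)) - 1 := by
  have hS : IsVertexSeparation L A B v := ⟨hcover, hinter, hnoedge⟩
  have hcard : ∀ X, IsMaximalInducedForest L X →
      X.card + 1 = forestNum (L.induce (A : Set V)) + forestNum (L.induce (B : Set V)) :=
    fun X hX => hS.card_add_one_eq hX (fun _ => hwA.card_eq_of_isMaximalInducedForestIn)
      (fun _ => hwB.card_eq_of_isMaximalInducedForestIn) fun Y hY => by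
        obtain ⟨Z, hZ, rfl⟩ := hY.exists_map_eq
        exact mem_map_of_mem _ (hv Z hZ)
  refine ⟨fun X Y hX hY => by have := hcard X hX; have := hcard Y hY; omega, ?_⟩
  obtain ⟨M, hM, hMcard⟩ := exists_isMaximalInducedForest_card_eq_forestNum L
  have := hcard M hM
  omega
end

section
/- Let L be a finite simple graph, and let A and B be subsets of its vertex set with A ∪ B equal to the whole vertex set, such that: no edge of L joins a vertex of A \ B to a vertex of B \ A; the induced subgraph L[B] is a forest (acyclic); A ∩ B = {u_1, ..., u_n} where u_1, u_2, ..., u_n are the vertices (in order) of a path of length n - 1 ≥ 1 in L[A], and the edges of L[B] between vertices of A ∩ B are exactly the edges {u_i, u_{i+1}} of this path. Then L is well-f-covered if and only if L[A] is well-f-covered, and in either case f(L) = f(L[A]) + |B| - n. -/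
/-!
Every cycle of `L` lies in `A`. Indeed, a cycle through a vertex `z ∈ B \ A` leaves `z` along an
edge `zy` of `L[B]`, and the rest of the cycle reconnects `z` and `y` without that edge. Collapsing
every vertex outside `B` onto the path `A ∩ B`, which is connected in `L[B]` and avoids `zy`, gives
such a reconnection inside the forest `L[B]`, which is impossible. Hence `X` induces a forest of `L`
iff `X ∩ A` does, so the maximal induced forests of `L` are exactly the sets `F ∪ (V \ A)` for the
maximal induced forests `F` of `L[A]`, and both claims follow by counting.
-/

open Finset

namespace SimpleGraph

variable {V W : Type*} {G : SimpleGraph V}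

def CyclesLieIn (G : SimpleGraph V) (s : Set V) : Prop :=
  ∀ ⦃v⦄ (c : G.Walk v v), c.IsCycle → ∀ z ∈ c.support, z ∈ s

lemma CyclesLieIn.mono {s t : Set V} (h : G.CyclesLieIn s) (hst : s ⊆ t) : G.CyclesLieIn t :=
  fun _ c hc z hz => hst (h c hc z hz)

lemma Reachable.map_of_forall_adj {H : SimpleGraph W} (f : V → W)
    (hf : ∀ ⦃a b⦄, G.Adj a b → H.Reachable (f a) (f b)) {a b : V} (h : G.Reachable a b) :
    H.Reachable (f a) (f b) := by
  obtain ⟨p⟩ := h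
  induction p with
  | nil => rfl
  | cons hab _ ih => exact (hf hab).trans ih

lemma Connected.induce_range {H : SimpleGraph W} (hH : H.Connected) (φ : H →g G) :
    (G.induce (Set.range φ)).Connected :=
  hH.map ⟨fun w => ⟨φ w, w, rfl⟩, φ.map_adj⟩ (by rintro ⟨_, w, rfl⟩; exact ⟨w, rfl⟩)

section Attached

variable {B S : Set V}

lemma reachable_induce_deleteEdges (hS : (G.induce S).Connected) (hSB : S ⊆ B)
    (hattach : ∀ ⦃a b⦄, a ∈ B → b ∉ B → G.Adj a b → a ∈ S) {z y : B} (hz : z.1 ∉ S)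
    (h : (G.deleteEdges {s(z.1, y.1)}).Reachable z y) :
    ((G.induce B).deleteEdges {s(z, y)}).Reachable z y := by
  classical
  set H := (G.induce B).deleteEdges {s(z, y)}
  obtain ⟨s₀⟩ := hS.nonempty
  have hS_reach : ∀ a (ha : a ∈ S), H.Reachable ⟨a, hSB ha⟩ ⟨s₀, hSB s₀.2⟩ := by
    intro a ha
    let ι : G.induce S →g H := ⟨fun x => ⟨x, hSB x.2⟩, fun {x w} hxw => by
      refine deleteEdges_adj.2 ⟨hxw, ?_⟩
      have := x.2; have := w.2
      simp only [Set.mem_singleton_iff, Sym2.eq_iff, Subtype.ext_iff]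
      grind⟩
    exact (hS.preconnected ⟨a, ha⟩ s₀).map ι
  let f : V → B := fun x => if hx : x ∈ B then ⟨x, hx⟩ else ⟨s₀, hSB s₀.2⟩
  have hf : ∀ ⦃a b⦄, (G.deleteEdges {s(z.1, y.1)}).Adj a b → H.Reachable (f a) (f b) := by
    intro a b hab
    rw [deleteEdges_adj, Set.mem_singleton_iff] at hab
    by_cases ha : a ∈ B <;> by_cases hb : b ∈ B <;> simp only [f, ha, hb, dite_true, dite_false]
    · refine Adj.reachable (deleteEdges_adj.2 ⟨hab.1, ?_⟩)
      simp only [Set.mem_singleton_iff, Sym2.eq_iff, Subtype.ext_iff] at hab ⊢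
      exact hab.2
    · exact hS_reach a (hattach ha hb hab.1)
    · exact (hS_reach b (hattach hb ha hab.1.symm)).symm
    · rfl
  simpa [f] using h.map_of_forall_adj f hf

theorem cyclesLieIn_compl_union (hB : (G.induce B).IsAcyclic) (hS : (G.induce S).Connected)
    (hSB : S ⊆ B) (hattach : ∀ ⦃a b⦄, a ∈ B → b ∉ B → G.Adj a b → a ∈ S) :
    G.CyclesLieIn (Bᶜ ∪ S) := by
  classical
  intro v c hc z hzc
  by_contra hz
  simp only [Set.mem_union, Set.mem_compl_iff, not_or, not_not] at hz
  obtain ⟨hzB, hzS⟩ := hz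
  set c' := c.rotate z hzc
  have hc' : c'.IsCycle := hc.rotate hzc
  have hadj : G.Adj z c'.snd := c'.adj_snd hc'.not_nil
  have hyB : c'.snd ∈ B := by
    by_contra hyB
    exact hzS (hattach hzB hyB hadj)
  have hreach : (G.deleteEdges {s(z, c'.snd)}).Reachable z c'.snd :=
    (adj_and_reachable_delete_edges_iff_exists_cycle.2
      ⟨z, c', hc', c'.mk_start_snd_mem_edges hc'.not_nil⟩).2
  have hbridge := isAcyclic_iff_forall_adj_isBridge.1 hB
    (show (G.induce B).Adj ⟨z, hzB⟩ ⟨c'.snd, hyB⟩ from hadj)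
  exact isBridge_iff.1 hbridge
    (reachable_induce_deleteEdges hS hSB hattach (z := ⟨z, hzB⟩) (y := ⟨_, hyB⟩) hzS hreach)

end Attached

lemma CyclesLieIn.isAcyclic_induce_iff_inter {A : Set V} (hcyc : G.CyclesLieIn A) (X : Set V) :
    (G.induce X).IsAcyclic ↔ (G.induce (X ∩ A)).IsAcyclic := by
  refine ⟨fun h => h.embedding (G.induceHomOfLE Set.inter_subset_left), fun h v c hc => ?_⟩
  set c' := c.map (Embedding.induce X).toHom
  have hc' : c'.IsCycle := hc.map Subtype.val_injective
  have hsupp : ∀ z ∈ c'.support, z ∈ X ∩ A := by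
    intro z hz
    refine ⟨?_, hcyc c' hc' z hz⟩
    rw [Walk.support_map] at hz
    obtain ⟨w, -, rfl⟩ := List.mem_map.1 hz
    exact w.2
  exact h (c'.induce _ hsupp) (Walk.IsCycle.of_map (by rwa [Walk.map_induce]))

lemma isAcyclic_induce_induce_iff (s : Set V) (t : Set s) :
    ((G.induce s).induce t).IsAcyclic ↔ (G.induce (Subtype.val '' t)).IsAcyclic :=
  Iso.isAcyclic_iff ⟨Equiv.Set.image _ t Subtype.val_injective, Iff.rfl⟩

end SimpleGraph

open SimpleGraph

section ForestNumber

variable {V : Type*} [Fintype V] {G : SimpleGraph V}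

lemma bddAbove_card_isInducedForest :
    BddAbove {n | ∃ X : Finset V, IsInducedForest G X ∧ X.card = n} :=
  ⟨Fintype.card V, by rintro _ ⟨X, -, rfl⟩; exact card_le_univ X⟩

lemma IsInducedForest.card_le_forestNum {X : Finset V} (h : IsInducedForest G X) :
    X.card ≤ forestNum G :=
  le_csSup bddAbove_card_isInducedForest ⟨X, h, rfl⟩

lemma exists_isInducedForest_card_eq_forestNum :
    ∃ X : Finset V, IsInducedForest G X ∧ X.card = forestNum G :=
  Nat.sSup_mem (s := {n | ∃ X : Finset V, IsInducedForest G X ∧ X.card = n})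
    ⟨0, ∅, fun v => by simpa using v.2, rfl⟩ bddAbove_card_isInducedForest

end ForestNumber

namespace SimpleGraph

variable {V : Type*} {G : SimpleGraph V} {A : Finset V}

lemma isInducedForest_induce_iff (F : Finset (A : Set V)) :
    IsInducedForest (G.induce A) F ↔ IsInducedForest G (F.map (Function.Embedding.subtype _)) := by
  rw [IsInducedForest, IsInducedForest, coe_map, Function.Embedding.coe_subtype]
  exact isAcyclic_induce_induce_iff _ (F : Set (A : Set V))

variable [DecidableEq V]

lemma CyclesLieIn.isInducedForest_iff (hcyc : G.CyclesLieIn A) (X : Finset V) :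
    IsInducedForest G X ↔ IsInducedForest (G.induce A) (X.subtype (· ∈ (A : Set V))) := by
  have hXA : X.filter (· ∈ (A : Set V)) = X ∩ A := by ext; simp
  rw [isInducedForest_induce_iff, subtype_map, hXA, IsInducedForest, IsInducedForest, coe_inter]
  exact hcyc.isAcyclic_induce_iff_inter _

variable [Fintype V]

def extendByCompl (A : Finset V) (F : Finset (A : Set V)) : Finset V :=
  F.map (Function.Embedding.subtype _) ∪ Aᶜ

lemma subtype_extendByCompl (F : Finset (A : Set V)) :
    (extendByCompl A F).subtype (· ∈ (A : Set V)) = F := by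
  ext ⟨x, hx⟩
  simp [extendByCompl, mem_coe.1 hx]

lemma subset_extendByCompl_subtype (X : Finset V) :
    X ⊆ extendByCompl A (X.subtype (· ∈ (A : Set V))) := by
  intro x hx
  by_cases hxA : x ∈ A <;> simp [extendByCompl, hx, hxA]

lemma extendByCompl_strictMono : StrictMono (extendByCompl A) :=
  Monotone.strictMono_of_injective (fun _ _ h => union_subset_union_left (map_subset_map.2 h))
    (Function.LeftInverse.injective subtype_extendByCompl)

lemma card_extendByCompl (F : Finset (A : Set V)) :
    (extendByCompl A F).card = F.card + Aᶜ.card := by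
  rw [extendByCompl, card_union_of_disjoint, card_map]
  refine Finset.disjoint_left.2 fun x hx hxc => ?_
  obtain ⟨a, -, rfl⟩ := mem_map.1 hx
  exact mem_compl.1 hxc a.2

lemma CyclesLieIn.isInducedForest_extendByCompl_iff (hcyc : G.CyclesLieIn A)
    (F : Finset (A : Set V)) :
    IsInducedForest G (extendByCompl A F) ↔ IsInducedForest (G.induce A) F := by
  rw [hcyc.isInducedForest_iff, subtype_extendByCompl]

lemma CyclesLieIn.isMaximalInducedForest_extendByCompl_iff (hcyc : G.CyclesLieIn A)
    (F : Finset (A : Set V)) :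
    IsMaximalInducedForest G (extendByCompl A F) ↔ IsMaximalInducedForest (G.induce A) F := by
  rw [IsMaximalInducedForest, IsMaximalInducedForest, hcyc.isInducedForest_extendByCompl_iff]
  refine and_congr_right fun _ => ⟨fun hmax F' hFF' hF' => ?_, fun hmax Y hY hYf => ?_⟩
  · exact hmax _ (extendByCompl_strictMono hFF') (hcyc.isInducedForest_extendByCompl_iff F' |>.2 hF')
  · have hF : F ⊆ Y.subtype (· ∈ (A : Set V)) := by
      simpa only [subtype_extendByCompl] using subtype_mono (p := (· ∈ (A : Set V))) hY.subset
    refine hmax _ (hF.ssubset_of_ne fun hFY => ?_) (hcyc.isInducedForest_iff Y |>.1 hYf)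
    exact (hY.trans_subset ((subset_extendByCompl_subtype Y).trans_eq (by rw [hFY]))).ne rfl

lemma CyclesLieIn.eq_extendByCompl_of_isMaximalInducedForest (hcyc : G.CyclesLieIn A)
    {X : Finset V} (hX : IsMaximalInducedForest G X) :
    X = extendByCompl A (X.subtype (· ∈ (A : Set V))) := by
  refine (subset_extendByCompl_subtype X).eq_of_not_ssubset fun hlt => hX.2 _ hlt ?_
  rw [hcyc.isInducedForest_extendByCompl_iff, ← hcyc.isInducedForest_iff]
  exact hX.1

theorem CyclesLieIn.wellFCovered_iff (hcyc : G.CyclesLieIn A) :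
    WellFCovered G ↔ WellFCovered (G.induce A) := by
  refine ⟨fun h F F' hF hF' => ?_, fun h X Y hX hY => ?_⟩
  · have := h _ _ (hcyc.isMaximalInducedForest_extendByCompl_iff F |>.2 hF)
      (hcyc.isMaximalInducedForest_extendByCompl_iff F' |>.2 hF')
    rwa [card_extendByCompl, card_extendByCompl, Nat.add_right_cancel_iff] at this
  · have hmax : ∀ {Z}, IsMaximalInducedForest G Z →
        IsMaximalInducedForest (G.induce A) (Z.subtype (· ∈ (A : Set V))) := fun hZ => by
      rw [← hcyc.isMaximalInducedForest_extendByCompl_iff,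
        ← hcyc.eq_extendByCompl_of_isMaximalInducedForest hZ]
      exact hZ
    rw [hcyc.eq_extendByCompl_of_isMaximalInducedForest hX,
      hcyc.eq_extendByCompl_of_isMaximalInducedForest hY, card_extendByCompl,
      card_extendByCompl, h _ _ (hmax hX) (hmax hY)]

theorem CyclesLieIn.forestNum_eq (hcyc : G.CyclesLieIn A) :
    forestNum G = forestNum (G.induce A) + Aᶜ.card := by
  obtain ⟨X, hX, hXcard⟩ := exists_isInducedForest_card_eq_forestNum (G := G)
  obtain ⟨F, hF, hFcard⟩ := exists_isInducedForest_card_eq_forestNum (G := G.induce A)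
  refine le_antisymm ?_ ?_
  · calc forestNum G = X.card := hXcard.symm
      _ ≤ (extendByCompl A (X.subtype (· ∈ (A : Set V)))).card :=
        card_le_card (subset_extendByCompl_subtype X)
      _ = (X.subtype (· ∈ (A : Set V))).card + Aᶜ.card := card_extendByCompl _
      _ ≤ forestNum (G.induce A) + Aᶜ.card := by
        gcongr
        exact (hcyc.isInducedForest_iff X |>.1 hX).card_le_forestNum
  · rw [← hFcard, ← card_extendByCompl]
    exact (hcyc.isInducedForest_extendByCompl_iff F |>.2 hF).card_le_forestNum

end SimpleGraph

/-- `A ∪ B` is the whole vertex set of `L`, no edge of `L` joins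
`A \ B` to `B \ A`, the induced subgraph `L[B]` is a forest, `A ∩ B` consists of the
`n` distinct vertices `u 0, ..., u (n-1)` (with `n - 1 ≥ 1`), and the edges of `L`
among these vertices are exactly the consecutive path edges `{u i, u (i+1)}` (a path
lying in `L[A]` and in `L[B]`). Then `L` is well-f-covered iff `L[A]` is, and in
either case `f(L) = f(L[A]) + |B| - n`. -/
theorem stmt10 {V : Type*} [Fintype V] [DecidableEq V] (L : SimpleGraph V)
    (A B : Finset V) (hcover : A ∪ B = Finset.univ)
    (hnoedge : ∀ a ∈ A, a ∉ B → ∀ b ∈ B, b ∉ A → ¬ L.Adj a b)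
    (hBforest : (L.induce (B : Set V)).IsAcyclic)
    (n : ℕ) (hn : 2 ≤ n) (u : Fin n → V) (hu : Function.Injective u)
    (hinter : A ∩ B = Finset.image u Finset.univ)
    (hpath : ∀ i j : Fin n, L.Adj (u i) (u j) ↔ ((i : ℕ) + 1 = (j : ℕ) ∨ (j : ℕ) + 1 = (i : ℕ))) :
    (WellFCovered L ↔ WellFCovered (L.induce (A : Set V))) ∧
      forestNum L = forestNum (L.induce (A : Set V)) + B.card - n := by
  have hmem : ∀ v, v ∈ A ∨ v ∈ B := fun v => mem_union.1 (hcover ▸ mem_univ v)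
  have hconn : (L.induce (A ∩ B : Finset V)).Connected := by
    obtain ⟨m, rfl⟩ : ∃ m, n = m + 1 := ⟨n - 1, by omega⟩
    rw [hinter, coe_image, coe_univ, Set.image_univ]
    exact (pathGraph_connected m).induce_range ⟨u, fun h => (hpath _ _).2 (pathGraph_adj.1 h)⟩
  have hattach : ∀ ⦃a b⦄, a ∈ B → b ∉ B → L.Adj a b → a ∈ A ∩ B := fun a b ha hb hab =>
    mem_inter.2 ⟨by_contra fun haA =>
      hnoedge b ((hmem b).resolve_right hb) hb a ha haA hab.symm, ha⟩
  have hcyc : L.CyclesLieIn A :=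
    (cyclesLieIn_compl_union hBforest hconn (by simp) (by simpa using hattach)).mono
      fun v hv => hv.elim (hmem v).resolve_right fun hv => (mem_inter.1 hv).1
  have hcard : (A ∩ B).card = n := by
    rw [hinter, card_image_of_injective _ hu, card_univ, Fintype.card_fin]
  have hcompl : Aᶜ = B \ A := by
    ext v
    have := hmem v
    simp only [mem_compl, mem_sdiff]
    tauto
  refine ⟨hcyc.wellFCovered_iff, ?_⟩
  rw [hcyc.forestNum_eq, hcompl, card_sdiff, hcard]
  have := hcard ▸ card_le_card (inter_subset_right : A ∩ B ⊆ B)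
  omega
end

section
/- Let G and H be finite simple graphs on disjoint vertex sets, each having at least one vertex, and suppose each of G and H has a maximal independent set of cardinality 1. Then the join G ∨ H is well-f-covered if and only if both G and H are complete graphs. -/
open SimpleGraph

namespace SimpleGraph

variable {α : Type*} {G : SimpleGraph α}

lemma isAcyclic_of_forall_adj_eq_or_eq (w : α) (h : ∀ u v, G.Adj u v → u = w ∨ v = w) :
    G.IsAcyclic := by
  -- deleting the edge `wv` isolates `v`, whose only neighbour is `w`
  have isBridge : ∀ v, G.Adj w v → G.IsBridge s(w, v) := by
    intro v hwv
    refine isBridge_iff.2 fun hr => ?_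
    obtain ⟨p⟩ := hr.symm
    cases p with
    | nil => exact hwv.ne rfl
    | cons hvx _ =>
      obtain ⟨hvx, hx⟩ := deleteEdges_adj.1 hvx
      rcases h _ _ hvx with rfl | rfl
      · exact hwv.ne rfl
      · exact hx (by simp [Sym2.eq_swap])
  rw [isAcyclic_iff_forall_adj_isBridge]
  intro u v huv
  rcases h u v huv with rfl | rfl
  · exact isBridge v huv
  · rw [Sym2.eq_swap]
    exact isBridge u huv.symm

end SimpleGraph

section InducedForest

variable {α : Type*} {K : SimpleGraph α}

lemma IsInducedForest.of_card_le_two {X : Finset α} (h : X.card ≤ 2) : IsInducedForest K X :=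
  IsAcyclic.of_card_le_two (by simpa using h)

lemma not_isInducedForest_of_adj {X : Finset α} {a b c : α} (ha : a ∈ X) (hb : b ∈ X)
    (hc : c ∈ X) (hab : K.Adj a b) (hac : K.Adj a c) (hbc : K.Adj b c) :
    ¬ IsInducedForest K X := by
  classical
  exact fun hX => hX.cliqueFree le_rfl _
    ((is3Clique_triple_iff (G := K.induce X) (a := ⟨a, ha⟩) (b := ⟨b, hb⟩) (c := ⟨c, hc⟩)).2
      ⟨hab, hac, hbc⟩)

lemma isInducedForest_triple_of_not_adj [DecidableEq α] {a b : α} (c : α)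
    (hab : ¬ K.Adj a b) : IsInducedForest K {a, b, c} := by
  refine isAcyclic_of_forall_adj_eq_or_eq ⟨c, by simp⟩ ?_
  rintro ⟨x, hx⟩ ⟨y, hy⟩ hxy
  change K.Adj x y at hxy
  simp only [Finset.coe_insert, Finset.coe_singleton, Set.mem_insert_iff,
    Set.mem_singleton_iff] at hx hy
  simp only [Subtype.mk.injEq]
  rcases hx with rfl | rfl | rfl <;> rcases hy with rfl | rfl | rfl <;>
    simp_all [adj_comm]

lemma IsInducedForest.exists_isMaximalInducedForest_superset [Finite α] {X : Finset α}
    (hX : IsInducedForest K X) : ∃ Y, X ⊆ Y ∧ IsMaximalInducedForest K Y := by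
  obtain ⟨Y, hXY, hY⟩ := Finite.exists_le_maximal (p := IsInducedForest K) hX
  exact ⟨Y, hXY, hY.prop, fun Z hYZ hZ => hYZ.not_ge (hY.le_of_ge hZ hYZ.le)⟩

lemma WellFCovered.card_le [Finite α] (hK : WellFCovered K) {X Y : Finset α}
    (hX : IsMaximalInducedForest K X) (hY : IsInducedForest K Y) : Y.card ≤ X.card := by
  obtain ⟨Z, hYZ, hZ⟩ := hY.exists_isMaximalInducedForest_superset
  exact (Finset.card_le_card hYZ).trans (hK Z X hZ hX).le

lemma isMaximalInducedForest_pair [DecidableEq α] {a b : α} (hab : K.Adj a b)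
    (h : ∀ x, x ≠ a → x ≠ b → K.Adj x a ∧ K.Adj x b) : IsMaximalInducedForest K {a, b} := by
  refine ⟨.of_card_le_two Finset.card_le_two, fun Y hY hYF => ?_⟩
  obtain ⟨x, hxY, hx⟩ := Finset.exists_of_ssubset hY
  rw [Finset.mem_insert, Finset.mem_singleton, not_or] at hx
  obtain ⟨hxa, hxb⟩ := h x hx.1 hx.2
  exact not_isInducedForest_of_adj hxY (hY.subset (by simp)) (hY.subset (by simp))
    hxa hxb hab hYF

lemma WellFCovered.adj_of_card_eq_two [Finite α] [DecidableEq α] (hK : WellFCovered K)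
    {X : Finset α} (hX : IsMaximalInducedForest K X) (hX2 : X.card = 2) {a b c : α}
    (hab : a ≠ b) (hac : a ≠ c) (hbc : b ≠ c) : K.Adj a b := by
  by_contra hnab
  have h3 : ({a, b, c} : Finset α).card = 3 :=
    Finset.card_eq_three.2 ⟨a, b, c, hab, hac, hbc, rfl⟩
  have := hK.card_le hX (isInducedForest_triple_of_not_adj c hnab)
  omega

lemma IsMaximalInducedForest.card_eq_min_top [Fintype α] {X : Finset α}
    (hX : IsMaximalInducedForest (⊤ : SimpleGraph α) X) : X.card = min 2 (Fintype.card α) := by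
  classical
  have hle2 : X.card ≤ 2 := by
    by_contra! h
    obtain ⟨a, ha, b, hb, c, hc, hab, hac, hbc⟩ := Finset.two_lt_card.1 h
    exact not_isInducedForest_of_adj ha hb hc hab hac hbc hX.1
  refine le_antisymm (le_min hle2 X.card_le_univ) (not_lt.1 fun hlt => ?_)
  have hne : X ≠ Finset.univ := by
    rintro rfl
    simp at hlt
  obtain ⟨c, -, hc⟩ := Finset.exists_of_ssubset (Finset.ssubset_univ_iff.2 hne)
  exact hX.2 _ (Finset.ssubset_insert hc)
    (.of_card_le_two (by rw [Finset.card_insert_of_notMem hc]; omega))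

lemma wellFCovered_top [Fintype α] : WellFCovered (⊤ : SimpleGraph α) :=
  fun _ _ hX hY => hX.card_eq_min_top.trans hY.card_eq_min_top.symm

end InducedForest

lemma IsMaximalIndepSet.exists_forall_adj_of_card_eq_one {α : Type*} {K : SimpleGraph α}
    {X : Finset α} (hX : IsMaximalIndepSet K X) (h1 : X.card = 1) :
    ∃ g, ∀ x, x ≠ g → K.Adj g x := by
  classical
  obtain ⟨g, rfl⟩ := Finset.card_eq_one.1 h1
  refine ⟨g, fun x hxg => by_contra fun hgx =>
    hX.2 {x, g} (Finset.ssubset_insert (by simp [hxg])) ?_⟩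
  intro u hu v hv huv
  simp only [Finset.mem_insert, Finset.mem_singleton] at hu hv
  rcases hu with rfl | rfl <;> rcases hv with rfl | rfl
  exacts [K.irrefl huv, hgx huv.symm, hgx huv, K.irrefl huv]

section Join

variable {V W : Type*} {G : SimpleGraph V} {H : SimpleGraph W}

lemma joinGraph_top_top : joinGraph (⊤ : SimpleGraph V) (⊤ : SimpleGraph W) = ⊤ := by
  ext (u | u) (v | v) <;> simp [joinGraph]

lemma isMaximalInducedForest_joinGraph_pair [DecidableEq V] [DecidableEq W] {g : V} {h : W}
    (hg : ∀ x, x ≠ g → G.Adj g x) (hh : ∀ y, y ≠ h → H.Adj h y) :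
    IsMaximalInducedForest (joinGraph G H) {Sum.inl g, Sum.inr h} := by
  refine isMaximalInducedForest_pair trivial ?_
  rintro (x | y) hx hy
  · exact ⟨(hg x (by rintro rfl; exact hx rfl)).symm, trivial⟩
  · exact ⟨trivial, (hh y (by rintro rfl; exact hy rfl)).symm⟩

end Join

theorem stmt14_general {V W : Type*} [Fintype V] [Fintype W]
    [Nonempty V] [Nonempty W] (G : SimpleGraph V) (H : SimpleGraph W)
    (hG : ∃ X : Finset V, IsMaximalIndepSet G X ∧ X.card = 1)
    (hH : ∃ X : Finset W, IsMaximalIndepSet H X ∧ X.card = 1) :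
    WellFCovered (joinGraph G H) ↔ (G = ⊤ ∧ H = ⊤) := by
  classical
  refine ⟨fun hK => ?_, by rintro ⟨rfl, rfl⟩; rw [joinGraph_top_top]; exact wellFCovered_top⟩
  obtain ⟨X, hX, hX1⟩ := hG
  obtain ⟨Y, hY, hY1⟩ := hH
  obtain ⟨g, hg⟩ := hX.exists_forall_adj_of_card_eq_one hX1
  obtain ⟨h, hh⟩ := hY.exists_forall_adj_of_card_eq_one hY1
  have hpair := isMaximalInducedForest_joinGraph_pair hg hh
  have hpair2 : ({Sum.inl g, Sum.inr h} : Finset (V ⊕ W)).card = 2 :=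
    Finset.card_pair Sum.inl_ne_inr
  obtain ⟨v⟩ := ‹Nonempty V›
  obtain ⟨w⟩ := ‹Nonempty W›
  refine ⟨eq_top_iff.2 fun x y hxy => ?_, eq_top_iff.2 fun x y hxy => ?_⟩
  · exact hK.adj_of_card_eq_two hpair hpair2 (c := Sum.inr w) (Sum.inl_injective.ne hxy)
      Sum.inl_ne_inr Sum.inl_ne_inr
  · exact hK.adj_of_card_eq_two hpair hpair2 (c := Sum.inl v) (Sum.inr_injective.ne hxy)
      Sum.inr_ne_inl Sum.inr_ne_inl

/-- Let `G` and `H` be graphs on nonempty disjoint vertex sets, each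
having a maximal independent set of cardinality 1. Then the join `G ∨ H` is
well-f-covered iff both `G` and `H` are complete graphs. -/
theorem stmt14 {V W : Type*} [Fintype V] [Fintype W] [DecidableEq V] [DecidableEq W]
    [Nonempty V] [Nonempty W] (G : SimpleGraph V) (H : SimpleGraph W)
    (hG : ∃ X : Finset V, IsMaximalIndepSet G X ∧ X.card = 1)
    (hH : ∃ X : Finset W, IsMaximalIndepSet H X ∧ X.card = 1) :
    WellFCovered (joinGraph G H) ↔ (G = ⊤ ∧ H = ⊤) :=
  stmt14_general G H hG hH
end
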